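/- Let E and F be Banach spaces, 1 ≤ p < ∞, and let u : E → F be a bounded linear operator. Then the following are equivalent: (i) for every mid p-summable sequence (x_j)_{j=1}^∞ in E, lim_{j→∞} ‖u(x_j)‖ = 0; (ii) for every mid p-summable sequence (x_j)_{j=1}^∞ in E, the sequence (u(x_j))_{j=1}^∞ is unconditionally p-summable in F. -/

import Mathlib

/-
If the tails of `(u x_j)` do not tend to zero in weak `p`-norm, there are `δ > 0`, consecutive
blocks of indices `[N_k, N_{k+1})` and functionals `φ_k` of norm at most one with
`∑_{j ∈ block k} |φ_k (u x_j)|^p > δ`. Combining the `x_j` of the `k`-th block with the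
coefficients of a norming functional of `ℓ_p(block k)` gives vectors `z_k` with
`‖u z_k‖^p > δ`, while `|ψ z_k|^p ≤ ∑_{j ∈ block k} |ψ x_j|^p` for every functional `ψ` of
norm at most one; hence `(z_k)` is again mid `p`-summable, contradicting (i).
Conversely, `‖y_n‖` is bounded by the weak `p`-norm of the tail `(y_{n+j})_j`.
-/


open Filter Topology
open scoped ENNReal NNReal

/-- The weak `ℓ_p` "norm" of a Banach-space valued sequence, valued in `ℝ≥0∞`:
`sup_{‖φ‖ ≤ 1} (∑_j |φ(x_j)|^p)^{1/p}`. -/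
noncomputable def weakLpNorm (𝕜 : Type*) [RCLike 𝕜] {X : Type*} [NormedAddCommGroup X]
    [NormedSpace 𝕜 X] (p : ℝ) (x : ℕ → X) : ℝ≥0∞ :=
  ⨆ φ ∈ {φ : X →L[𝕜] 𝕜 | ‖φ‖ ≤ 1}, (∑' j, (‖φ (x j)‖₊ : ℝ≥0∞) ^ p) ^ (1 / p)

/-- A sequence is weakly `p`-summable if `(φ(x_j))_j ∈ ℓ_p` for every continuous functional. -/
def WeaklyLpSummable (𝕜 : Type*) [RCLike 𝕜] {X : Type*} [NormedAddCommGroup X]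
    [NormedSpace 𝕜 X] (p : ℝ) (x : ℕ → X) : Prop :=
  ∀ φ : X →L[𝕜] 𝕜, Summable fun j => ‖φ (x j)‖ ^ p

/-- A sequence is unconditionally `p`-summable if it is weakly `p`-summable and the weak
`p`-norms of its tails tend to zero. -/
def UncondLpSummable (𝕜 : Type*) [RCLike 𝕜] {X : Type*} [NormedAddCommGroup X]
    [NormedSpace 𝕜 X] (p : ℝ) (x : ℕ → X) : Prop :=
  WeaklyLpSummable 𝕜 p x ∧
    Tendsto (fun n : ℕ => weakLpNorm 𝕜 p fun j => x (n + j)) atTop (𝓝 (0 : ℝ≥0∞))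

/-- The mid `p`-"norm" of a sequence, valued in `ℝ≥0∞`: the supremum of
`(∑_n ∑_j |φ_n(x_j)|^p)^{1/p}` over all weakly `p`-summable sequences `(φ_n)` in the dual
with weak `p`-norm at most one.  A sequence is mid `p`-summable iff this is `< ⊤`. -/
noncomputable def midLpNorm (𝕜 : Type*) [RCLike 𝕜] {X : Type*} [NormedAddCommGroup X]
    [NormedSpace 𝕜 X] (p : ℝ) (x : ℕ → X) : ℝ≥0∞ :=
  ⨆ φ ∈ {φ : ℕ → X →L[𝕜] 𝕜 | WeaklyLpSummable 𝕜 p φ ∧ weakLpNorm 𝕜 p φ ≤ 1},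
    (∑' n, ∑' j, (‖φ n (x j)‖₊ : ℝ≥0∞) ^ p) ^ (1 / p)

open Finset

section

variable {𝕜 : Type*} [RCLike 𝕜] {X : Type*} [NormedAddCommGroup X] [NormedSpace 𝕜 X]
  {p : ℝ}

theorem exists_norming_coeffs (hp : 1 ≤ p) {ι : Type*} (I : Finset ι) (s : ι → 𝕜) :
    ∃ a : ι → 𝕜, (‖∑ i ∈ I, a i * s i‖₊ : ℝ≥0∞) ^ p = ∑ i ∈ I, (‖s i‖₊ : ℝ≥0∞) ^ p ∧
      ∀ t : ι → 𝕜, (‖∑ i ∈ I, a i * t i‖₊ : ℝ≥0∞) ^ p ≤ ∑ i ∈ I, (‖t i‖₊ : ℝ≥0∞) ^ p := by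
  classical
  have hp0 : 0 < p := zero_lt_one.trans_le hp
  have : Fact (1 ≤ ENNReal.ofReal p) := ⟨by simpa using ENNReal.ofReal_le_ofReal hp⟩
  let toLp : (I → 𝕜) → PiLp (ENNReal.ofReal p) (fun _ : I => 𝕜) := WithLp.toLp _
  have hnorm : ∀ t : ι → 𝕜, (‖toLp fun i => t i‖₊ : ℝ≥0∞) ^ p =
      ∑ i ∈ I, (‖t i‖₊ : ℝ≥0∞) ^ p := by
    intro t
    have h : ‖toLp fun i => t i‖₊ ^ p = ∑ i : I, ‖t i‖₊ ^ p := by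
      rw [PiLp.nnnorm_eq_sum ENNReal.ofReal_ne_top, ENNReal.toReal_ofReal hp0.le, one_div,
        NNReal.rpow_inv_rpow hp0.ne']
    rw [← ENNReal.coe_rpow_of_nonneg _ hp0.le, h, ← Finset.sum_coe_sort I]
    push_cast [ENNReal.coe_rpow_of_nonneg _ hp0.le]
    rfl
  -- `a` lists the coordinates of a Hahn–Banach norming functional for `s` in `ℓ_p(I)`
  obtain ⟨g, hg, hgs⟩ := exists_dual_vector'' 𝕜 (toLp fun i => s i)
  let L : (I → 𝕜) →ₗ[𝕜] 𝕜 := g.toLinearMap ∘ₗ (WithLp.linearEquiv _ 𝕜 _).symm.toLinearMap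
  have hL : ∀ t : ι → 𝕜, ∑ i ∈ I, L (fun j => if (i : ι) = j then 1 else 0) * t i
      = g (toLp fun i => t i) := by
    intro t
    rw [← Finset.sum_coe_sort I]
    simp only [mul_comm _ (t _), Subtype.coe_inj, ← smul_eq_mul]
    exact (L.pi_apply_eq_sum_univ fun i => t i).symm
  refine ⟨fun i => L fun j => if i = (j : ι) then 1 else 0, ?_, fun t => ?_⟩
  · rw [hL, hgs, ← hnorm]
    simp
  · rw [hL, ← hnorm]
    gcongr
    exact g.le_of_opNorm_le hg _ |>.trans_eq (one_mul _)

theorem le_weakLpNorm {x : ℕ → X} {φ : X →L[𝕜] 𝕜} (hφ : ‖φ‖ ≤ 1) :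
    (∑' j, (‖φ (x j)‖₊ : ℝ≥0∞) ^ p) ^ (1 / p) ≤ weakLpNorm 𝕜 p x :=
  le_iSup₂ (f := fun φ (_ : φ ∈ {φ : X →L[𝕜] 𝕜 | ‖φ‖ ≤ 1}) =>
    (∑' j, (‖φ (x j)‖₊ : ℝ≥0∞) ^ p) ^ (1 / p)) φ hφ

theorem antitone_weakLpNorm_tail (hp : 0 ≤ p) (x : ℕ → X) :
    Antitone fun n => weakLpNorm 𝕜 p fun j => x (n + j) := by
  intro n m hnm
  refine iSup₂_le fun φ hφ => le_trans ?_ (le_weakLpNorm hφ)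
  obtain ⟨k, rfl⟩ := Nat.exists_eq_add_of_le hnm
  refine ENNReal.rpow_le_rpow ?_ (one_div_nonneg.mpr hp)
  simpa only [add_assoc, add_comm k] using
    ENNReal.tsum_comp_le_tsum_of_injective (add_left_injective k)
      fun j => (‖φ (x (n + j))‖₊ : ℝ≥0∞) ^ p

theorem nnnorm_le_weakLpNorm (hp : 0 < p) (x : ℕ → X) (n : ℕ) :
    (‖x n‖₊ : ℝ≥0∞) ≤ weakLpNorm 𝕜 p x := by
  obtain ⟨g, hg, hgx⟩ := exists_dual_vector'' 𝕜 (x n)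
  calc (‖x n‖₊ : ℝ≥0∞) = ((‖g (x n)‖₊ : ℝ≥0∞) ^ p) ^ (1 / p) := by
        rw [hgx, one_div, ENNReal.rpow_rpow_inv hp.ne']
        simp
    _ ≤ (∑' j, (‖g (x j)‖₊ : ℝ≥0∞) ^ p) ^ (1 / p) := by gcongr; exact ENNReal.le_tsum n
    _ ≤ weakLpNorm 𝕜 p x := le_weakLpNorm hg

theorem UncondLpSummable.tendsto_norm_zero (hp : 0 < p) {x : ℕ → X}
    (hx : UncondLpSummable 𝕜 p x) : Tendsto (fun j => ‖x j‖) atTop (𝓝 0) := by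
  have h : Tendsto (fun n => (‖x n‖₊ : ℝ≥0∞)) atTop (𝓝 0) :=
    tendsto_of_tendsto_of_tendsto_of_le_of_le tendsto_const_nhds hx.2 (fun _ => zero_le)
      fun n => by simpa using nnnorm_le_weakLpNorm (𝕜 := 𝕜) hp (fun j => x (n + j)) 0
  simpa [Function.comp_def] using (ENNReal.tendsto_toReal ENNReal.zero_ne_top).comp h

theorem le_midLpNorm (hp : 0 < p) (x : ℕ → X) {ψ : X →L[𝕜] 𝕜} (hψ : ‖ψ‖ ≤ 1) :
    (∑' j, (‖ψ (x j)‖₊ : ℝ≥0∞) ^ p) ^ (1 / p) ≤ midLpNorm 𝕜 p x := by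
  let e : ℕ → X →L[𝕜] 𝕜 := Pi.single 0 ψ
  have hsingle : ∀ f : (X →L[𝕜] 𝕜) → ℝ≥0∞, f 0 = 0 → ∑' n, f (e n) = f ψ :=
    fun f hf => by
      rw [tsum_eq_single 0 fun n hn => by simp [e, hn, hf]]
      simp [e]
  have hmem : e ∈
      {φ : ℕ → X →L[𝕜] 𝕜 | WeaklyLpSummable 𝕜 p φ ∧ weakLpNorm 𝕜 p φ ≤ 1} := by
    refine ⟨fun Φ => ?_, iSup₂_le fun Φ hΦ => ?_⟩
    · exact (hasSum_single 0 fun n hn => by simp [e, Pi.single_eq_of_ne hn, hp.ne']).summable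
    · rw [hsingle (fun φ => (‖Φ φ‖₊ : ℝ≥0∞) ^ p) (by simp [hp])]
      refine ENNReal.rpow_le_one (ENNReal.rpow_le_one ?_ hp.le) (by positivity)
      exact_mod_cast (Φ.le_of_opNorm_le hΦ ψ).trans (by simpa using hψ)
  calc _ = (∑' n, ∑' j, (‖e n (x j)‖₊ : ℝ≥0∞) ^ p) ^ (1 / p) := by
        rw [hsingle (fun φ => ∑' j, (‖φ (x j)‖₊ : ℝ≥0∞) ^ p) (by simp [hp])]
    _ ≤ midLpNorm 𝕜 p x :=
      le_iSup₂ (f := fun φ (_ : φ ∈ {φ : ℕ → X →L[𝕜] 𝕜 | WeaklyLpSummable 𝕜 p φ ∧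
        weakLpNorm 𝕜 p φ ≤ 1}) => (∑' n, ∑' j, (‖φ n (x j)‖₊ : ℝ≥0∞) ^ p) ^ (1 / p)) _ hmem

theorem weaklyLpSummable_of_midLpNorm_lt_top (hp : 0 < p) {x : ℕ → X}
    (hx : midLpNorm 𝕜 p x < ⊤) : WeaklyLpSummable 𝕜 p x := by
  intro ψ
  set r : ℝ := ‖ψ‖ + 1
  have hr : 0 < r := by positivity
  have hψ₀ : ‖((r⁻¹ : ℝ) : 𝕜) • ψ‖ ≤ 1 := by
    rw [norm_smul, RCLike.norm_ofReal, abs_of_pos (inv_pos.mpr hr), inv_mul_le_iff₀ hr]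
    linarith
  have hfin : ∑' j, (‖(((r⁻¹ : ℝ) : 𝕜) • ψ) (x j)‖₊ : ℝ≥0∞) ^ p ≠ ⊤ :=
    (ENNReal.rpow_eq_top_iff_of_pos (one_div_pos.mpr hp)).not.mp
      ((le_midLpNorm hp x hψ₀).trans_lt hx).ne
  refine ((ENNReal.summable_toReal hfin).mul_left (r ^ p)).congr fun j => ?_
  rw [← ENNReal.toReal_rpow, smul_apply, smul_eq_mul, nnnorm_mul,
    ENNReal.coe_toReal, NNReal.coe_mul, coe_nnnorm, coe_nnnorm, RCLike.norm_ofReal,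
    abs_of_pos (inv_pos.mpr hr), ← Real.mul_rpow hr.le (by positivity), mul_inv_cancel_left₀ hr.ne']

theorem exists_sum_range_gt_of_lt_weakLpNorm (hp : 0 < p) {x : ℕ → X} {η : ℝ≥0∞}
    (hη : η < weakLpNorm 𝕜 p x) :
    ∃ φ : X →L[𝕜] 𝕜, ‖φ‖ ≤ 1 ∧ ∃ m, η ^ p < ∑ j ∈ range m, (‖φ (x j)‖₊ : ℝ≥0∞) ^ p := by
  obtain ⟨φ, hφ, hlt⟩ : ∃ φ : X →L[𝕜] 𝕜, ‖φ‖ ≤ 1 ∧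
      η < (∑' j, (‖φ (x j)‖₊ : ℝ≥0∞) ^ p) ^ (1 / p) := by
    simpa [weakLpNorm, lt_iSup_iff] using hη
  refine ⟨φ, hφ, lt_iSup_iff.mp ?_⟩
  rw [← ENNReal.tsum_eq_iSup_nat]
  simpa [ENNReal.rpow_inv_rpow hp.ne'] using ENNReal.rpow_lt_rpow hlt hp

theorem exists_blocks_of_not_tendsto_weakLpNorm_tail (hp : 0 < p) {x : ℕ → X}
    (hx : ¬Tendsto (fun n => weakLpNorm 𝕜 p fun j => x (n + j)) atTop (𝓝 0)) :
    ∃ δ > 0, ∀ n, ∃ m > n, ∃ φ : X →L[𝕜] 𝕜, ‖φ‖ ≤ 1 ∧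
      δ < ∑ j ∈ Ico n m, (‖φ (x j)‖₊ : ℝ≥0∞) ^ p := by
  have hinf : (⨅ n, weakLpNorm 𝕜 p fun j => x (n + j)) ≠ 0 := fun h0 =>
    hx (h0 ▸ tendsto_atTop_iInf (antitone_weakLpNorm_tail hp.le x))
  obtain ⟨η, hη0, hη⟩ := exists_between (pos_iff_ne_zero.mpr hinf)
  refine ⟨η ^ p, ENNReal.rpow_pos hη0 (ne_top_of_lt hη), fun n => ?_⟩
  obtain ⟨φ, hφ, k, hk⟩ := exists_sum_range_gt_of_lt_weakLpNorm hp (hη.trans_le (iInf_le _ n))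
  have hk0 : k ≠ 0 := by rintro rfl; simp at hk
  refine ⟨n + k, by omega, φ, hφ, ?_⟩
  rwa [sum_Ico_eq_sum_range, Nat.add_sub_cancel_left]

theorem ENNReal.tsum_sum_Ico_le_tsum {N : ℕ → ℕ} (hN : Monotone N) (f : ℕ → ℝ≥0∞) :
    ∑' k, ∑ j ∈ Ico (N k) (N (k + 1)), f j ≤ ∑' j, f j := by
  refine ENNReal.tsum_le_of_sum_range_le fun K => ?_
  have hcollapse :
      ∑ k ∈ range K, ∑ j ∈ Ico (N k) (N (k + 1)), f j = ∑ j ∈ Ico (N 0) (N K), f j := by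
    induction K with
    | zero => simp
    | succ K ih =>
      rw [sum_range_succ, ih, sum_Ico_consecutive _ (hN K.zero_le) (hN K.le_succ)]
  exact hcollapse ▸ ENNReal.sum_le_tsum _

theorem midLpNorm_blockSum_le (hp : 0 ≤ p) {N : ℕ → ℕ} (hN : Monotone N) {a : ℕ → ℕ → 𝕜}
    (ha : ∀ k (t : ℕ → 𝕜), (‖∑ j ∈ Ico (N k) (N (k + 1)), a k j * t j‖₊ : ℝ≥0∞) ^ p ≤
      ∑ j ∈ Ico (N k) (N (k + 1)), (‖t j‖₊ : ℝ≥0∞) ^ p) (x : ℕ → X) :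
    midLpNorm 𝕜 p (fun k => ∑ j ∈ Ico (N k) (N (k + 1)), a k j • x j) ≤ midLpNorm 𝕜 p x := by
  refine iSup₂_mono fun ψ _ => ENNReal.rpow_le_rpow ?_ (one_div_nonneg.mpr hp)
  refine ENNReal.tsum_le_tsum fun n => ?_
  calc ∑' k, (‖ψ n (∑ j ∈ Ico (N k) (N (k + 1)), a k j • x j)‖₊ : ℝ≥0∞) ^ p
      ≤ ∑' k, ∑ j ∈ Ico (N k) (N (k + 1)), (‖ψ n (x j)‖₊ : ℝ≥0∞) ^ p :=
        ENNReal.tsum_le_tsum fun k => by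
          simpa only [map_sum, map_smul, smul_eq_mul] using ha k fun j => ψ n (x j)
    _ ≤ ∑' j, (‖ψ n (x j)‖₊ : ℝ≥0∞) ^ p := ENNReal.tsum_sum_Ico_le_tsum hN _

end

theorem tendsto_weakLpNorm_tail_of_forall_tendsto {𝕜 : Type*} [RCLike 𝕜] {E : Type*}
    [NormedAddCommGroup E] [NormedSpace 𝕜 E] {F : Type*} [NormedAddCommGroup F]
    [NormedSpace 𝕜 F] {p : ℝ} (hp : 1 ≤ p) (u : E →L[𝕜] F)
    (hu : ∀ x : ℕ → E, midLpNorm 𝕜 p x < ⊤ → Tendsto (fun j => ‖u (x j)‖) atTop (𝓝 0))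
    {x : ℕ → E} (hx : midLpNorm 𝕜 p x < ⊤) :
    Tendsto (fun n => weakLpNorm 𝕜 p fun j => u (x (n + j))) atTop (𝓝 0) := by
  have hp0 : 0 < p := zero_lt_one.trans_le hp
  by_contra hne
  obtain ⟨δ, hδ, hblock⟩ :=
    exists_blocks_of_not_tendsto_weakLpNorm_tail (x := fun j => u (x j)) hp0 hne
  choose m hm φ hφ hδm using hblock
  let N : ℕ → ℕ := fun k => m^[k] 0
  have hN : ∀ k, N (k + 1) = m (N k) := fun k => Function.iterate_succ_apply' m k 0
  have hNmono : Monotone N := monotone_nat_of_le_succ fun k => (hN k ▸ hm (N k)).le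
  choose a ha_eq ha_le using fun k =>
    exists_norming_coeffs hp (Ico (N k) (N (k + 1))) fun j => φ (N k) (u (x j))
  let z : ℕ → E := fun k => ∑ j ∈ Ico (N k) (N (k + 1)), a k j • x j
  have hz : midLpNorm 𝕜 p z < ⊤ := (midLpNorm_blockSum_le hp0.le hNmono ha_le x).trans_lt hx
  have hlow : ∀ k, δ < (‖u (z k)‖₊ : ℝ≥0∞) ^ p := by
    intro k
    calc δ < ∑ j ∈ Ico (N k) (N (k + 1)), (‖φ (N k) (u (x j))‖₊ : ℝ≥0∞) ^ p :=
          hN k ▸ hδm (N k)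
      _ = (‖φ (N k) (u (z k))‖₊ : ℝ≥0∞) ^ p := by
          rw [← ha_eq k]; simp [z, map_sum, map_smul]
      _ ≤ (‖u (z k)‖₊ : ℝ≥0∞) ^ p := by
          gcongr
          exact ((φ _).le_of_opNorm_le (hφ _) _).trans_eq (one_mul _)
  have hlim : Tendsto (fun k => (‖u (z k)‖₊ : ℝ≥0∞) ^ p) atTop (𝓝 0) := by
    have := ((ENNReal.continuous_rpow_const (y := p)).tendsto _).comp
      (ENNReal.tendsto_ofReal (hu z hz))
    simp only [Function.comp_def, ENNReal.ofReal_zero, ENNReal.zero_rpow_of_pos hp0,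
      ofReal_norm] at this
    exact this
  obtain ⟨k, hk⟩ := (hlim.eventually (gt_mem_nhds hδ)).exists
  exact (hlow k).not_gt hk

theorem stmt_13_general {𝕜 : Type*} [RCLike 𝕜] {E : Type*} [NormedAddCommGroup E] [NormedSpace 𝕜 E]
    {F : Type*} [NormedAddCommGroup F] [NormedSpace 𝕜 F]
    {p : ℝ} (hp : 1 ≤ p) (u : E →L[𝕜] F) :
    (∀ x : ℕ → E, midLpNorm 𝕜 p x < ⊤ → Tendsto (fun j => ‖u (x j)‖) atTop (𝓝 0)) ↔
    (∀ x : ℕ → E, midLpNorm 𝕜 p x < ⊤ → UncondLpSummable 𝕜 p fun j => u (x j)) := by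
  have hp0 : 0 < p := zero_lt_one.trans_le hp
  exact ⟨fun h x hx => ⟨fun φ => weaklyLpSummable_of_midLpNorm_lt_top hp0 hx (φ.comp u),
      tendsto_weakLpNorm_tail_of_forall_tendsto hp u h hx⟩,
    fun h x hx => (h x hx).tendsto_norm_zero hp0⟩

/-- For a bounded operator `u : E → F` between Banach spaces and
`1 ≤ p < ∞`, the following are equivalent: (i) `‖u(x_j)‖ → 0` for every mid `p`-summable
`(x_j)` in `E`; (ii) `(u(x_j))_j` is unconditionally `p`-summable for every mid
`p`-summable `(x_j)` in `E`. -/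
theorem stmt_13 {𝕜 : Type*} [RCLike 𝕜] {E : Type*} [NormedAddCommGroup E] [NormedSpace 𝕜 E]
    [CompleteSpace E] {F : Type*} [NormedAddCommGroup F] [NormedSpace 𝕜 F] [CompleteSpace F]
    {p : ℝ} (hp : 1 ≤ p) (u : E →L[𝕜] F) :
    (∀ x : ℕ → E, midLpNorm 𝕜 p x < ⊤ → Tendsto (fun j => ‖u (x j)‖) atTop (𝓝 0)) ↔
    (∀ x : ℕ → E, midLpNorm 𝕜 p x < ⊤ → UncondLpSummable 𝕜 p fun j => u (x j)) :=
  stmt_13_general hp u
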